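/- arXiv:1309.0888 — 3 statements merged into one kernel-verified Lean document; each statement's English description precedes it below -/
import Mathlib

section
/- Let n ≥ 2 be an integer. For any vector y ∈ Γ_{3n}, the distance in G_{3n} from the zero vector 0 to y satisfies d_{G_{3n}}(0, y) ≤ (2/3)·(number of nonzero coordinates of y), and equality holds if and only if all nonzero coordinates of y are identical. -/
open SimpleGraph

/-- The `k`th power of a graph `G`: two distinct vertices are adjacent iff their
distance in `G` is (finite and) at most `k`. -/
def SimpleGraph.power {V : Type*} (G : SimpleGraph V) (k : ℕ) : SimpleGraph V where
  Adj u v := u ≠ v ∧ G.Reachable u v ∧ G.dist u v ≤ k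
  symm := by
    constructor
    rintro u v ⟨h1, h2, h3⟩
    exact ⟨h1.symm, h2.symm, by rwa [SimpleGraph.dist_comm]⟩
  loopless := by
    constructor
    rintro v ⟨h1, -, -⟩
    exact h1 rfl

/-- `G` admits a proper coloring from the lists `L`. -/
def SimpleGraph.Choosable {V : Type*} (G : SimpleGraph V) (L : V → Finset ℕ) : Prop :=
  ∃ φ : V → ℕ, (∀ v, φ v ∈ L v) ∧ ∀ u v, G.Adj u v → φ u ≠ φ v

/-- The list chromatic number of `G`: the least `t` such that `G` is colorable from
any assignment of lists of size at least `t`. -/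
noncomputable def SimpleGraph.listChromaticNumber {V : Type*} (G : SimpleGraph V) : ℕ :=
  sInf {t : ℕ | ∀ L : V → Finset ℕ, (∀ v, t ≤ (L v).card) → G.Choosable L}

/-- The lexicographic product of two graphs. -/
def SimpleGraph.lexProd {V W : Type*} (G : SimpleGraph V) (H : SimpleGraph W) :
    SimpleGraph (V × W) where
  Adj a b := G.Adj a.1 b.1 ∨ (a.1 = b.1 ∧ H.Adj a.2 b.2)
  symm := by
    constructor
    rintro a b (h | ⟨h1, h2⟩)
    · exact Or.inl h.symm
    · exact Or.inr ⟨h1.symm, h2.symm⟩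
  loopless := by
    constructor
    rintro a (h | ⟨-, h2⟩)
    · exact G.loopless.irrefl _ h
    · exact H.loopless.irrefl _ h2

/-- Vertex set `Γ_m`: the vectors in `ℤ_3^m` whose coordinates sum to zero. -/
def GammaVert (m : ℕ) : Type := {z : Fin m → ZMod 3 // ∑ i, z i = 0}

/-- The generator `x_{i,j}`: `1` in coordinate `i`, `2` in coordinate `j`, `0` elsewhere. -/
def xvec (m : ℕ) (i j : Fin m) : Fin m → ZMod 3 :=
  fun l => if l = i then 1 else if l = j then 2 else 0

/-- The Cayley graph `G_m` on `Γ_m` with connection set `X_m = {x_{i,j} : i ≠ j}`. -/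
def Gm (m : ℕ) : SimpleGraph (GammaVert m) where
  Adj y z := ∃ i j : Fin m, i ≠ j ∧ y.1 - z.1 = xvec m i j
  symm := by
    constructor
    rintro y z ⟨i, j, hij, h⟩
    refine ⟨j, i, hij.symm, ?_⟩
    have h' : z.1 - y.1 = -(y.1 - z.1) := by ring
    rw [h', h]
    funext l
    simp only [xvec, Pi.neg_apply]
    by_cases h1 : l = i
    · subst h1
      simp only [if_pos rfl, if_neg hij]
      decide
    · by_cases h2 : l = j
      · subst h2
        simp only [if_pos rfl, if_neg h1]
        decide
      · simp only [if_neg h1, if_neg h2]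
        decide
  loopless := by
    constructor
    rintro y ⟨i, j, hij, h⟩
    have := congrFun h i
    simp [xvec] at this

/-!
The weights `∑ l, (y l).val = a + 2b` and `∑ l, (-y l).val = 2a + b`, where `a` and `b` count
the coordinates of `y` equal to `1` and to `2`, change by at most `3` along an edge, so their
maximum `potential y` is at most `3 d(0, y)`. Conversely every `y ≠ 0` has a neighbour
`y - x_{i,j}` with `potential` smaller by `3`: take `y i = 1`, `y j = 2` if there are such
coordinates, and otherwise two nonzero coordinates (they exist as `∑ l, y l = 0`). Hence
`3 d(0, y) = max (2a + b) (a + 2b)`, which is at most `2(a + b)`, with equality iff `a = 0` or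
`b = 0`.
-/

open Finset

theorem Fintype.sum_add_add_eq_of_eq_off_pair {ι M : Type*} [Fintype ι] [DecidableEq ι]
    [AddCommMonoid M] {f g : ι → M} {i j : ι} (hij : i ≠ j)
    (hfg : ∀ l, l ≠ i → l ≠ j → f l = g l) :
    ∑ l, f l + g i + g j = ∑ l, g l + f i + f j := by
  have hcompl : ∑ l ∈ {i, j}ᶜ, f l = ∑ l ∈ {i, j}ᶜ, g l :=
    Finset.sum_congr rfl fun l hl => by
      simp only [mem_compl, mem_insert, mem_singleton, not_or] at hl
      exact hfg l hl.1 hl.2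
  rw [← sum_add_sum_compl {i, j} f, ← sum_add_sum_compl {i, j} g, sum_pair hij, sum_pair hij,
    hcompl]
  abel

theorem Fintype.exists_ne_ne_zero_of_sum_eq_zero {ι M : Type*} [Fintype ι] [AddCommMonoid M]
    {y : ι → M} (hsum : ∑ l, y l = 0) (hy : y ≠ 0) : ∃ i j, i ≠ j ∧ y i ≠ 0 ∧ y j ≠ 0 := by
  obtain ⟨i, hi⟩ := Function.ne_iff.mp hy
  by_contra! h
  exact hi (by rwa [Fintype.sum_eq_single i fun j hji => h i j hji.symm hi] at hsum)

namespace SimpleGraph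

variable {V : Type*} {G : SimpleGraph V} {f : V → ℕ} {k : ℕ}

theorem Walk.le_add_mul_length (hf : ∀ u v, G.Adj u v → f v ≤ f u + k) {u v : V}
    (p : G.Walk u v) : f v ≤ f u + k * p.length := by
  induction p with
  | nil => simp
  | cons h p ih =>
    rw [Walk.length_cons, mul_add_one]
    linarith [hf _ _ h]

theorem Reachable.le_add_mul_dist (hf : ∀ u v, G.Adj u v → f v ≤ f u + k) {u v : V}
    (huv : G.Reachable u v) : f v ≤ f u + k * G.dist u v := by
  obtain ⟨p, hp⟩ := huv.exists_walk_length_eq_dist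
  exact hp ▸ p.le_add_mul_length hf

theorem exists_walk_mul_length_le (hk : 0 < k) {v₀ : V}
    (hf : ∀ v, v ≠ v₀ → ∃ u, G.Adj u v ∧ f u + k ≤ f v) (v : V) :
    ∃ p : G.Walk v₀ v, k * p.length ≤ f v := by
  induction hv : f v using Nat.strong_induction_on generalizing v with
  | _ N ih =>
    by_cases hv₀ : v = v₀
    · subst hv₀
      exact ⟨Walk.nil, by simp⟩
    obtain ⟨u, hadj, hu⟩ := hf v hv₀
    obtain ⟨p, hp⟩ := ih (f u) (by omega) u rfl
    refine ⟨p.concat hadj, ?_⟩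
    rw [Walk.length_concat, mul_add_one]
    omega

end SimpleGraph

namespace Gm

variable {m : ℕ}

theorem xvec_apply_of_ne {i j l : Fin m} (hli : l ≠ i) (hlj : l ≠ j) : xvec m i j l = 0 := by
  simp [xvec, hli, hlj]

theorem sum_xvec {i j : Fin m} (hij : i ≠ j) : ∑ l, xvec m i j l = 0 := by
  rw [Fintype.sum_eq_add i j hij fun l hl => xvec_apply_of_ne hl.1 hl.2]
  simp [xvec, hij.symm]
  decide

def subXvec (y : GammaVert m) {i j : Fin m} (hij : i ≠ j) : GammaVert m :=
  ⟨y.1 - xvec m i j, by simp only [Pi.sub_apply, sum_sub_distrib, y.2, sum_xvec hij, sub_self]⟩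

theorem adj_subXvec (y : GammaVert m) {i j : Fin m} (hij : i ≠ j) :
    (Gm m).Adj y (subXvec y hij) :=
  ⟨i, j, hij, sub_sub_cancel _ _⟩

def weight (s : ZMod 3) (y : Fin m → ZMod 3) : ℕ := ∑ l, (s * y l).val

def potential (y : Fin m → ZMod 3) : ℕ := max (weight 1 y) (weight (-1) y)

theorem weight_sub_xvec (s : ZMod 3) (y : Fin m → ZMod 3) {i j : Fin m} (hij : i ≠ j) :
    weight s (y - xvec m i j) + (s * y i).val + (s * y j).val =
      weight s y + (s * (y i - 1)).val + (s * (y j - 2)).val := by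
  have hi : (y - xvec m i j) i = y i - 1 := by simp [xvec]
  have hj : (y - xvec m i j) j = y j - 2 := by simp [xvec, hij.symm]
  rw [weight, weight, ← hi, ← hj]
  exact Fintype.sum_add_add_eq_of_eq_off_pair (f := fun l => (s * (y - xvec m i j) l).val)
    (g := fun l => (s * y l).val) hij fun l hli hlj => by simp [xvec_apply_of_ne hli hlj]

theorem weight_sub_xvec_le (s : ZMod 3) (y : Fin m → ZMod 3) {i j : Fin m} (hij : i ≠ j) :
    weight s (y - xvec m i j) ≤ weight s y + 3 := by
  have key : ∀ s a b : ZMod 3, (s * (a - 1)).val + (s * (b - 2)).val ≤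
      (s * a).val + (s * b).val + 3 := by decide
  linarith [weight_sub_xvec s y hij, key s (y i) (y j)]

theorem natCast_weight (s : ZMod 3) (y : Fin m → ZMod 3) :
    (weight s y : ZMod 3) = s * ∑ l, y l := by
  simp [weight, mul_sum]

theorem three_dvd_weight (s : ZMod 3) (y : GammaVert m) : 3 ∣ weight s y.1 := by
  rw [← ZMod.natCast_eq_zero_iff, natCast_weight, y.2, mul_zero]

theorem val_mul_le_two_mul_ite (s t : ZMod 3) : (s * t).val ≤ 2 * if t ≠ 0 then 1 else 0 := by
  revert s t
  decide

theorem weight_le_two_mul_card (s : ZMod 3) (y : Fin m → ZMod 3) :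
    weight s y ≤ 2 * #{l | y l ≠ 0} := by
  rw [card_filter, mul_sum]
  exact sum_le_sum fun l _ => val_mul_le_two_mul_ite s (y l)

theorem weight_eq_two_mul_card_iff {s : ZMod 3} (hs : s ≠ 0) (y : Fin m → ZMod 3) :
    weight s y = 2 * #{l | y l ≠ 0} ↔ ∀ l, s * y l ≠ 1 := by
  have key : ∀ s t : ZMod 3, s ≠ 0 →
      (((s * t).val = 2 * if t ≠ 0 then 1 else 0) ↔ s * t ≠ 1) := by decide
  rw [card_filter, mul_sum, weight,
    sum_eq_sum_iff_of_le fun l _ => val_mul_le_two_mul_ite s (y l)]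
  simp only [mem_univ, true_implies, key s _ hs]

theorem potential_eq_max {c : ZMod 3} (hc : c ≠ 0) (y : Fin m → ZMod 3) :
    potential y = max (weight c y) (weight (-c) y) := by
  obtain rfl | rfl : c = 1 ∨ c = -1 := by revert c; decide
  · rfl
  · rw [potential, neg_neg, max_comm]

theorem weight_neg_eq_two_mul {c : ZMod 3} {y : Fin m → ZMod 3} (hy : ∀ l, y l = 0 ∨ y l = c) :
    weight (-c) y = 2 * weight c y := by
  have key : ∀ c t : ZMod 3, t = 0 ∨ t = c → (-c * t).val = 2 * (c * t).val := by decide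
  rw [weight, weight, mul_sum]
  exact sum_congr rfl fun l _ => key c (y l) (hy l)

theorem potential_sub_xvec_add_three_of_eq_one_of_eq_two {y : Fin m → ZMod 3} {i j : Fin m}
    (hij : i ≠ j) (hi : y i = 1) (hj : y j = 2) :
    potential (y - xvec m i j) + 3 = potential y := by
  have key : ∀ s : ZMod 3, s ≠ 0 →
      (s * (1 - 1)).val + (s * (2 - 2)).val + 3 = (s * 1).val + (s * 2).val := by decide
  have hpos := weight_sub_xvec 1 y hij
  have hneg := weight_sub_xvec (-1) y hij
  rw [hi, hj] at hpos hneg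
  have := key 1 one_ne_zero
  have := key (-1) (by decide)
  simp only [potential]
  omega

/-- Here `weight (-c) y = 2 * weight c y` with `weight c y` a positive multiple of `3`, so after
the step, which lowers `weight (-c)` by `3` and keeps `weight c`, `weight (-c)` is still the larger
one. -/
theorem potential_sub_xvec_add_three_le_of_forall_eq {c : ZMod 3} (hc : c ≠ 0) (y : GammaVert m)
    (hy : ∀ l, y.1 l = 0 ∨ y.1 l = c) {i j : Fin m} (hij : i ≠ j) (hi : y.1 i = c)
    (hj : y.1 j = c) : potential (y.1 - xvec m i j) + 3 ≤ potential y.1 := by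
  have key : ∀ c : ZMod 3, c ≠ 0 →
      (c * (c - 1)).val + (c * (c - 2)).val = 2 * (c * c).val ∧
      (-c * (c - 1)).val + (-c * (c - 2)).val + 3 = 2 * (-c * c).val ∧
      (c * c).val = 1 := by decide
  obtain ⟨hkc, hknc, hcc⟩ := key c hc
  have hpos := weight_sub_xvec c y.1 hij
  have hneg := weight_sub_xvec (-c) y.1 hij
  rw [hi, hj] at hpos hneg
  have hwc : (c * y.1 i).val ≤ weight c y.1 :=
    single_le_sum (f := fun l => (c * y.1 l).val) (fun _ _ => Nat.zero_le _) (mem_univ i)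
  rw [hi, hcc] at hwc
  have h3 := three_dvd_weight c y
  have h2 := weight_neg_eq_two_mul hy
  rw [potential_eq_max hc, potential_eq_max hc]
  omega

theorem exists_adj_potential_add_le (y : GammaVert m) (hy : y.1 ≠ 0) :
    ∃ z, (Gm m).Adj z y ∧ potential z.1 + 3 ≤ potential y.1 := by
  by_cases hmix : ∃ i j, y.1 i = 1 ∧ y.1 j = 2
  · obtain ⟨i, j, hi, hj⟩ := hmix
    have hij : i ≠ j := by
      rintro rfl
      exact absurd (hi.symm.trans hj) (by decide)
    exact ⟨subXvec y hij, (adj_subXvec y hij).symm,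
      (potential_sub_xvec_add_three_of_eq_one_of_eq_two hij hi hj).le⟩
  · push Not at hmix
    obtain ⟨i, j, hij, hi, hj⟩ := Fintype.exists_ne_ne_zero_of_sum_eq_zero y.2 hy
    have key : ∀ a b : ZMod 3, a ≠ 0 → (a = 1 → b ≠ 2) → (b = 1 → a ≠ 2) → b = 0 ∨ b = a := by
      decide
    have hconst : ∀ l, y.1 l = 0 ∨ y.1 l = y.1 i := fun l => key _ _ hi (hmix i l) (hmix l i)
    exact ⟨subXvec y hij, (adj_subXvec y hij).symm, potential_sub_xvec_add_three_le_of_forall_eq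
      hi y hconst hij rfl ((hconst j).resolve_left hj)⟩

theorem potential_le_of_adj {u v : GammaVert m} (huv : (Gm m).Adj u v) :
    potential v.1 ≤ potential u.1 + 3 := by
  obtain ⟨i, j, hij, hx⟩ := huv
  have hv : v.1 = u.1 - xvec m i j := by rw [← hx, sub_sub_cancel]
  have := weight_sub_xvec_le 1 u.1 hij
  have := weight_sub_xvec_le (-1) u.1 hij
  simp only [potential, hv]
  omega

theorem three_mul_dist_eq_potential (y : GammaVert m) :
    3 * (Gm m).dist ⟨0, by simp⟩ y = potential y.1 := by
  obtain ⟨p, hp⟩ := exists_walk_mul_length_le three_pos (v₀ := (⟨0, by simp⟩ : GammaVert m))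
    (fun v hv => exists_adj_potential_add_le v fun h => hv (Subtype.ext h)) y
  have h0 : potential (0 : Fin m → ZMod 3) = 0 := by simp [potential, weight]
  have hlower := Reachable.le_add_mul_dist (fun _ _ => potential_le_of_adj) ⟨p⟩
  rw [h0, zero_add] at hlower
  exact le_antisymm ((Nat.mul_le_mul_left 3 (dist_le p)).trans hp) hlower

theorem forall_ne_one_or_forall_ne_neg_one_iff {ι : Type*} (y : ι → ZMod 3) :
    ((∀ l, y l ≠ 1) ∨ ∀ l, y l ≠ -1) ↔ ∀ i j, y i ≠ 0 → y j ≠ 0 → y i = y j := by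
  constructor
  · have key : ∀ e a b : ZMod 3, e ≠ 0 → a ≠ 0 → b ≠ 0 → a ≠ e → b ≠ e → a = b := by decide
    rintro (h | h) i j hi hj
    · exact key 1 _ _ one_ne_zero hi hj (h i) (h j)
    · exact key (-1) _ _ (by decide) hi hj (h i) (h j)
  · intro h
    by_contra! hmix
    obtain ⟨⟨i, hi⟩, j, hj⟩ := hmix
    have hij := h i j (by rw [hi]; decide) (by rw [hj]; decide)
    rw [hi, hj] at hij
    exact absurd hij (by decide)

end Gm

/-- Let `n ≥ 2`. For any `y ∈ Γ_{3n}`, the distance from `0` to `y` in `G_{3n}` is at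
most `(2/3)` times the number of nonzero coordinates of `y` (stated multiplied by 3),
with equality iff all nonzero coordinates of `y` are identical. -/
theorem dist_zero_le (n : ℕ) (y : GammaVert (3 * n)) :
    3 * (Gm (3 * n)).dist ⟨0, by simp⟩ y ≤
      2 * (Finset.univ.filter (fun i => y.1 i ≠ 0)).card ∧
    (3 * (Gm (3 * n)).dist ⟨0, by simp⟩ y =
        2 * (Finset.univ.filter (fun i => y.1 i ≠ 0)).card ↔
      ∀ i j : Fin (3 * n), y.1 i ≠ 0 → y.1 j ≠ 0 → y.1 i = y.1 j) := by
  rw [Gm.three_mul_dist_eq_potential, Gm.potential]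
  have hpos := Gm.weight_le_two_mul_card 1 y.1
  have hneg := Gm.weight_le_two_mul_card (-1) y.1
  have hmax : ∀ a b c : ℕ, a ≤ c → b ≤ c → (max a b = c ↔ a = c ∨ b = c) := by omega
  refine ⟨max_le hpos hneg, ?_⟩
  rw [hmax _ _ _ hpos hneg, Gm.weight_eq_two_mul_card_iff one_ne_zero,
    Gm.weight_eq_two_mul_card_iff (by decide), ← Gm.forall_ne_one_or_forall_ne_neg_one_iff]
  simp only [one_mul, neg_one_mul, ne_eq, neg_eq_iff_eq_neg]
end

section
/- Let n ≥ 2 be an integer. The (2n−1)th power of G_{3n} is the complete multipartite graph K_{3⋆3^{3n−2}} (with 3^{3n−2} partite sets each of size 3), whose partite sets are exactly the equivalence classes of the relation ∼ on Γ_{3n} defined by y ∼ z if and only if y − z ∈ {0, a_{3n}, b_{3n}}, where a_{3n} = (1,…,1) and b_{3n} = (2,…,2). -/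
/-!
For `d = y - z` put `weight d = ∑ l, (d l).val`, the coordinates read in `{0, 1, 2}`. Every
generator `x_{i,j}` has weight `3` and the weight is subadditive, so a walk from `y` to `z` has
length at least `max (weight d) (weight (-d)) / 3`. Conversely, for `d ≠ 0` some `x_{i,j}` lowers
this maximum by exactly `3`: take `d i = 1`, `d j = 2` if both values occur, and otherwise two
equal nonzero coordinates. Hence `3 · dist(y, z) = max (weight d) (weight (-d))`.

On `Γ_{3n}` both weights are multiples of `3` and at most `6n`, with `weight d = 6n` only for
`d = (2, …, 2)` and `weight (-d) = 6n` only for `d = (1, …, 1)`. So `y ≠ z` are at distance at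
most `2n - 1` exactly when `y - z` is not constant. The classes of `∼` are the translates of
`{0, a, b}`, hence have three elements each, and `|Γ_m| = 3^(m-1)` gives `3^(m-2)` classes.
-/

open SimpleGraph

open Finset

lemma Setoid.ncard_classes_mul {α : Type*} [Finite α] (r : Setoid α) {k : ℕ}
    (h : ∀ c ∈ r.classes, c.ncard = k) : r.classes.ncard * k = Nat.card α := by
  classical
  have := Fintype.ofFinite α
  have := Fintype.ofFinite r.classes
  rw [← Set.ncard_univ, r.isPartition_classes.ncard_eq_finsum Set.univ,
    finsum_eq_sum_of_fintype]
  simp only [Set.univ_inter]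
  rw [sum_congr rfl fun c _ => h c.1 c.2, sum_const, smul_eq_mul, card_univ,
    ← Nat.card_eq_fintype_card, Nat.card_coe_set_eq]

def finSuccSumZeroEquiv (G : Type*) [AddCommGroup G] (k : ℕ) :
    {f : Fin (k + 1) → G // ∑ i, f i = 0} ≃ (Fin k → G) where
  toFun f := Fin.init f.1
  invFun w := ⟨Fin.snoc w (-∑ i, w i), by simp [Fin.sum_univ_castSucc]⟩
  left_inv := by
    rintro ⟨f, hf⟩
    rw [Fin.sum_univ_castSucc] at hf
    have hlast : -∑ i, Fin.init f i = f (Fin.last k) := neg_eq_of_add_eq_zero_right hf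
    refine Subtype.ext ?_
    change Fin.snoc (Fin.init f) (-∑ i, Fin.init f i) = f
    rw [hlast, Fin.snoc_init_self]
  right_inv w := Fin.init_snoc _ _

section Weight
variable {ι : Type*} [Fintype ι]

def weight (d : ι → ZMod 3) : ℕ := ∑ l, (d l).val

lemma weight_add_le (d e : ι → ZMod 3) : weight (d + e) ≤ weight d + weight e := by
  rw [weight, weight, weight, ← sum_add_distrib]
  exact sum_le_sum fun l _ => ZMod.val_add_le _ _

lemma weight_eq_zero_iff {d : ι → ZMod 3} : weight d = 0 ↔ d = 0 := by
  simp [weight, sum_eq_zero_iff, funext_iff]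

lemma three_dvd_weight {d : ι → ZMod 3} (hd : ∑ l, d l = 0) : 3 ∣ weight d := by
  rw [← ZMod.natCast_eq_zero_iff, weight]
  push_cast
  simpa only [ZMod.natCast_zmod_val] using hd

lemma weight_le_two_mul_card (d : ι → ZMod 3) : weight d ≤ 2 * Fintype.card ι :=
  calc weight d ≤ ∑ _l : ι, 2 := sum_le_sum fun l _ => Nat.le_of_lt_succ (ZMod.val_lt (d l))
    _ = 2 * Fintype.card ι := by simp [mul_comm]

lemma weight_eq_two_mul_card_iff {d : ι → ZMod 3} :
    weight d = 2 * Fintype.card ι ↔ d = fun _ => 2 := by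
  have hconst : 2 * Fintype.card ι = ∑ _l : ι, 2 := by simp [mul_comm]
  rw [weight, hconst,
    sum_eq_sum_iff_of_le fun l _ => Nat.le_of_lt_succ (ZMod.val_lt (d l))]
  simp only [mem_univ, true_implies, funext_iff]
  refine forall_congr' fun l => ?_
  generalize d l = a
  revert a; decide

lemma weight_add_val_add_val_eq {f g : ι → ZMod 3} {i j : ι} (hij : i ≠ j)
    (hfg : ∀ l, l ≠ i → l ≠ j → f l = g l) :
    weight f + (g i).val + (g j).val = weight g + (f i).val + (f j).val := by
  classical
  have split (h : ι → ZMod 3) :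
      weight h = (h i).val + ((h j).val + ∑ l ∈ (univ.erase i).erase j, (h l).val) := by
    rw [add_sum_erase _ (fun l => (h l).val) (mem_erase.2 ⟨hij.symm, mem_univ j⟩),
      add_sum_erase _ (fun l => (h l).val) (mem_univ i), weight]
  have hrest :
      ∑ l ∈ (univ.erase i).erase j, (f l).val = ∑ l ∈ (univ.erase i).erase j, (g l).val :=
    sum_congr rfl fun l hl => by
      obtain ⟨hlj, hli, -⟩ := by simpa only [mem_erase] using hl
      rw [hfg l hli hlj]
  rw [split f, split g, hrest]
  ring

def maxWeight (d : ι → ZMod 3) : ℕ := max (weight d) (weight (-d))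

lemma maxWeight_neg (d : ι → ZMod 3) : maxWeight (-d) = maxWeight d := by
  rw [maxWeight, maxWeight, neg_neg, max_comm]

lemma three_dvd_maxWeight {d : ι → ZMod 3} (hd : ∑ l, d l = 0) : 3 ∣ maxWeight d := by
  rcases max_choice (weight d) (weight (-d)) with h | h <;> rw [maxWeight, h]
  · exact three_dvd_weight hd
  · exact three_dvd_weight (by simp [hd])

lemma maxWeight_lt_two_mul_card_iff {d : ι → ZMod 3} :
    maxWeight d < 2 * Fintype.card ι ↔ d ≠ (fun _ => 1) ∧ d ≠ (fun _ => 2) := by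
  have hneg : -d = (fun _ => 2) ↔ d = fun _ => 1 := by
    have h21 : (-fun _ => 2 : ι → ZMod 3) = fun _ => 1 := funext fun _ => by
      simp only [Pi.neg_apply]; decide
    rw [neg_eq_iff_eq_neg, h21]
  rw [ne_eq, ne_eq, ← hneg, ← weight_eq_two_mul_card_iff, ← weight_eq_two_mul_card_iff,
    maxWeight, max_lt_iff]
  have := weight_le_two_mul_card d
  have := weight_le_two_mul_card (-d)
  omega

end Weight

section Xvec
variable {m : ℕ} {i j l : Fin m}

lemma xvec_apply_left : xvec m i j i = 1 := by simp [xvec]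

lemma xvec_apply_right (hij : i ≠ j) : xvec m i j j = 2 := by simp [xvec, hij.symm]

lemma xvec_apply_of_ne (hi : l ≠ i) (hj : l ≠ j) : xvec m i j l = 0 := by simp [xvec, hi, hj]

lemma sum_xvec (hij : i ≠ j) : ∑ l, xvec m i j l = 0 := by
  rw [Fintype.sum_eq_add i j hij fun l hl => xvec_apply_of_ne hl.1 hl.2, xvec_apply_left,
    xvec_apply_right hij]
  decide

lemma weight_xvec (hij : i ≠ j) : weight (xvec m i j) = 3 := by
  rw [weight,
    Fintype.sum_eq_add i j hij fun l hl => by rw [xvec_apply_of_ne hl.1 hl.2, ZMod.val_zero],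
    xvec_apply_left, xvec_apply_right hij]
  rfl

lemma weight_sub_xvec (d : Fin m → ZMod 3) (hij : i ≠ j) :
    weight (d - xvec m i j) + (d i).val + (d j).val = weight d + (d i - 1).val + (d j - 2).val := by
  simpa [xvec_apply_left, xvec_apply_right hij] using
    weight_add_val_add_val_eq (f := d - xvec m i j) (g := d) hij fun l hi hj => by
      simp [xvec_apply_of_ne hi hj]

lemma weight_neg_sub_xvec (d : Fin m → ZMod 3) (hij : i ≠ j) :
    weight (-(d - xvec m i j)) + (-d i).val + (-d j).val =
      weight (-d) + (1 - d i).val + (2 - d j).val := by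
  simpa [xvec_apply_left, xvec_apply_right hij] using
    weight_add_val_add_val_eq (f := -(d - xvec m i j)) (g := -d) hij fun l hi hj => by
      simp [xvec_apply_of_ne hi hj]

lemma maxWeight_sub_xvec_of_eq_one_of_eq_two {d : Fin m → ZMod 3} (hi : d i = 1)
    (hj : d j = 2) : maxWeight (d - xvec m i j) + 3 = maxWeight d := by
  have hij : i ≠ j := fun h => absurd (hi ▸ h ▸ hj) (by decide)
  have h1 := weight_sub_xvec d hij
  have h2 := weight_neg_sub_xvec d hij
  rw [hi, hj] at h1 h2
  change weight _ + 1 + 2 = weight d + 0 + 0 at h1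
  change weight _ + 2 + 1 = weight (-d) + 0 + 0 at h2
  rw [maxWeight, maxWeight]
  omega

lemma xvec_swap (hij : i ≠ j) : xvec m j i = -xvec m i j := by
  funext l
  rcases eq_or_ne l i with rfl | hli
  · rw [Pi.neg_apply, xvec_apply_right hij.symm, xvec_apply_left]; decide
  rcases eq_or_ne l j with rfl | hlj
  · rw [Pi.neg_apply, xvec_apply_left, xvec_apply_right hij]; decide
  · rw [Pi.neg_apply, xvec_apply_of_ne hlj hli, xvec_apply_of_ne hli hlj, neg_zero]

lemma exists_maxWeight_sub_xvec_add_three_le_of_ne_two {d : Fin m → ZMod 3}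
    (hsum : ∑ l, d l = 0) (hd : d ≠ 0) (hd2 : ∀ l, d l ≠ 2) :
    ∃ i j, i ≠ j ∧ maxWeight (d - xvec m i j) + 3 ≤ maxWeight d := by
  have hval (l : Fin m) :
      (d l).val = (if d l = 1 then 1 else 0) ∧ (-d l).val = 2 * (d l).val := by
    have := hd2 l
    generalize d l = a at this ⊢
    revert a; decide
  have hneg : weight (-d) = 2 * weight d := by
    rw [weight, weight, mul_sum]
    exact sum_congr rfl fun l _ => (hval l).2
  have hcard : weight d = #{l | d l = 1} := by
    rw [weight, card_filter]
    exact sum_congr rfl fun l _ => (hval l).1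
  have hpos : weight d ≠ 0 := fun h => hd (weight_eq_zero_iff.1 h)
  have h3 := three_dvd_weight hsum
  obtain ⟨i, hi, j, hj, hij⟩ := one_lt_card.1 (by omega : 1 < #{l | d l = 1})
  rw [mem_filter] at hi hj
  refine ⟨i, j, hij, ?_⟩
  -- `weight d` stays, and `weight (-d) = 2 * weight d ≥ weight d + 3` drops by `3`.
  have h1 := weight_sub_xvec d hij
  have h2 := weight_neg_sub_xvec d hij
  rw [hi.2, hj.2] at h1 h2
  change weight _ + 1 + 1 = weight d + 0 + 2 at h1
  change weight _ + 2 + 2 = weight (-d) + 0 + 1 at h2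
  rw [maxWeight, maxWeight]
  omega

lemma exists_maxWeight_sub_xvec_add_three_le {d : Fin m → ZMod 3} (hsum : ∑ l, d l = 0)
    (hd : d ≠ 0) : ∃ i j, i ≠ j ∧ maxWeight (d - xvec m i j) + 3 ≤ maxWeight d := by
  by_cases hmix : (∃ i, d i = 1) ∧ ∃ j, d j = 2
  · obtain ⟨⟨i, hi⟩, j, hj⟩ := hmix
    exact ⟨i, j, fun h => absurd (hi ▸ h ▸ hj) (by decide),
      (maxWeight_sub_xvec_of_eq_one_of_eq_two hi hj).le⟩
  rw [not_and_or, not_exists, not_exists] at hmix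
  rcases hmix with hd1 | hd2
  · have hnd2 (l : Fin m) : (-d) l ≠ 2 := by
      rw [Pi.neg_apply, ne_eq, neg_eq_iff_eq_neg]
      exact hd1 l
    obtain ⟨i, j, hij, h⟩ := exists_maxWeight_sub_xvec_add_three_le_of_ne_two
      (by simp [hsum]) (neg_ne_zero.2 hd) hnd2
    refine ⟨j, i, hij.symm, ?_⟩
    have hswap : d - xvec m j i = -(-d - xvec m i j) := by
      rw [xvec_swap hij]
      abel
    rwa [hswap, maxWeight_neg, ← maxWeight_neg d]
  · exact exists_maxWeight_sub_xvec_add_three_le_of_ne_two hsum hd hd2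

end Xvec

section Graph
variable {m : ℕ}

lemma GammaVert.sum_sub_eq_zero (y z : GammaVert m) : ∑ l, (y.1 - z.1) l = 0 := by
  simp [sum_sub_distrib, y.2, z.2]

lemma exists_Gm_adj_sub_xvec (y : GammaVert m) {i j : Fin m} (hij : i ≠ j) :
    ∃ y' : GammaVert m, (Gm m).Adj y y' ∧ y'.1 = y.1 - xvec m i j := by
  have hsum : ∑ l, (y.1 - xvec m i j) l = 0 := by simp [sum_sub_distrib, y.2, sum_xvec hij]
  exact ⟨⟨_, hsum⟩, ⟨i, j, hij, sub_sub_cancel _ _⟩, rfl⟩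

lemma weight_sub_le_three_mul_length {y z : GammaVert m} (p : (Gm m).Walk y z) :
    weight (y.1 - z.1) ≤ 3 * p.length := by
  induction p with
  | nil => simp [weight]
  | @cons a b c hab p ih =>
    rw [SimpleGraph.Walk.length_cons]
    obtain ⟨i, j, hij, hxab⟩ := hab
    calc weight (a.1 - c.1) = weight (xvec m i j + (b.1 - c.1)) := by
          rw [← hxab, sub_add_sub_cancel]
      _ ≤ weight (xvec m i j) + weight (b.1 - c.1) := weight_add_le _ _
      _ ≤ 3 * (p.length + 1) := by
          rw [weight_xvec hij]
          omega

lemma exists_Gm_walk_three_mul_length_le (y z : GammaVert m) :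
    ∃ p : (Gm m).Walk y z, 3 * p.length ≤ maxWeight (y.1 - z.1) := by
  induction hw : maxWeight (y.1 - z.1) using Nat.strong_induction_on generalizing y with
  | _ w ih =>
  by_cases hyz : y = z
  · subst hyz
    exact ⟨.nil, by simp⟩
  obtain ⟨i, j, hij, hdrop⟩ := exists_maxWeight_sub_xvec_add_three_le
    (GammaVert.sum_sub_eq_zero y z) (sub_ne_zero.2 (Subtype.coe_injective.ne hyz))
  obtain ⟨y', hadj, hy'⟩ := exists_Gm_adj_sub_xvec y hij
  have hdiff : y'.1 - z.1 = y.1 - z.1 - xvec m i j := by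
    rw [hy']
    abel
  obtain ⟨p, hp⟩ := ih (maxWeight (y.1 - z.1 - xvec m i j)) (by omega) y' (by rw [hdiff])
  refine ⟨.cons hadj p, ?_⟩
  rw [SimpleGraph.Walk.length_cons]
  omega

lemma Gm_reachable (y z : GammaVert m) : (Gm m).Reachable y z :=
  (exists_Gm_walk_three_mul_length_le y z).elim fun p _ => ⟨p⟩

lemma three_mul_Gm_dist (y z : GammaVert m) : 3 * (Gm m).dist y z = maxWeight (y.1 - z.1) := by
  obtain ⟨p, hp⟩ := exists_Gm_walk_three_mul_length_le y z
  obtain ⟨q, hq⟩ := (Gm_reachable y z).exists_walk_length_eq_dist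
  refine le_antisymm ((Nat.mul_le_mul_left 3 (SimpleGraph.dist_le p)).trans hp) (max_le ?_ ?_)
  · exact hq ▸ weight_sub_le_three_mul_length q
  · rw [neg_sub, ← hq, ← SimpleGraph.Walk.length_reverse]
    exact weight_sub_le_three_mul_length q.reverse

lemma Gm_power_adj_iff (k : ℕ) (y z : GammaVert m) :
    ((Gm m).power k).Adj y z ↔ y ≠ z ∧ maxWeight (y.1 - z.1) ≤ 3 * k := by
  rw [← three_mul_Gm_dist, Nat.mul_le_mul_left_iff (by norm_num)]
  exact and_congr_right fun _ => and_iff_right (Gm_reachable y z)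

end Graph

instance (m : ℕ) : Finite (GammaVert m) :=
  inferInstanceAs (Finite {z : Fin m → ZMod 3 // ∑ i, z i = 0})

lemma card_gammaVert {m : ℕ} (hm : 0 < m) : Nat.card (GammaVert m) = 3 ^ (m - 1) := by
  obtain ⟨k, rfl⟩ : ∃ k, m = k + 1 := ⟨m - 1, by omega⟩
  exact (Nat.card_congr (finSuccSumZeroEquiv (ZMod 3) k)).trans (by simp)

lemma exists_eq_const_iff {m : ℕ} (v : Fin m → ZMod 3) :
    (∃ a : ZMod 3, v = fun _ => a) ↔ v = 0 ∨ v = (fun _ => 1) ∨ v = (fun _ => 2) := by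
  constructor
  · rintro ⟨a, rfl⟩
    rcases (by decide : ∀ a : ZMod 3, a = 0 ∨ a = 1 ∨ a = 2) a with rfl | rfl | rfl
    exacts [Or.inl rfl, Or.inr (Or.inl rfl), Or.inr (Or.inr rfl)]
  · rintro (h | h | h) <;> exact ⟨_, h⟩

/-- The relation `∼`: `y - z ∈ {0, a_m, b_m}` says that `y - z` is a constant vector. -/
def constDiffSetoid (m : ℕ) : Setoid (GammaVert m) where
  r y z := ∃ a : ZMod 3, y.1 - z.1 = fun _ => a
  iseqv.refl y := ⟨0, sub_self y.1⟩
  iseqv.symm := fun ⟨a, h⟩ => ⟨-a, by rw [← neg_sub, h]; rfl⟩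
  iseqv.trans := fun ⟨a, h⟩ ⟨b, h'⟩ =>
    ⟨a + b, by rw [← sub_add_sub_cancel, h, h']; rfl⟩

lemma constDiffSetoid_iff {m : ℕ} {y z : GammaVert m} :
    constDiffSetoid m y z ↔ ∃ a : ZMod 3, y.1 - z.1 = fun _ => a :=
  Iff.rfl

lemma Gm_power_adj_iff_not_constDiff {n : ℕ} (hn : 1 ≤ n) (y z : GammaVert (3 * n)) :
    ((Gm (3 * n)).power (2 * n - 1)).Adj y z ↔ ¬ constDiffSetoid (3 * n) y z := by
  have h3 := three_dvd_maxWeight (GammaVert.sum_sub_eq_zero y z)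
  have hlt : maxWeight (y.1 - z.1) ≤ 3 * (2 * n - 1) ↔
      maxWeight (y.1 - z.1) < 2 * Fintype.card (Fin (3 * n)) := by
    rw [Fintype.card_fin]
    omega
  have hyz : y = z ↔ y.1 - z.1 = 0 := by
    rw [sub_eq_zero]
    exact Subtype.ext_iff (p := fun v : Fin (3 * n) → ZMod 3 => ∑ l, v l = 0)
  rw [Gm_power_adj_iff, hlt, maxWeight_lt_two_mul_card_iff, constDiffSetoid_iff,
    exists_eq_const_iff, ne_eq, hyz]
  tauto

def GammaVert.addConst {m : ℕ} (hm : 3 ∣ m) (y : GammaVert m) (a : ZMod 3) : GammaVert m :=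
  ⟨y.1 + fun _ => a, by
    change ∑ l, (y.1 l + a) = 0
    rw [sum_add_distrib, y.2, zero_add, sum_const, card_univ, Fintype.card_fin, nsmul_eq_mul,
      (ZMod.natCast_eq_zero_iff m 3).2 hm, zero_mul]⟩

lemma GammaVert.addConst_val {m : ℕ} (hm : 3 ∣ m) (y : GammaVert m) (a : ZMod 3) :
    (y.addConst hm a).1 = y.1 + fun _ => a :=
  rfl

lemma GammaVert.addConst_injective {m : ℕ} (hm : 3 ∣ m) (hm0 : 0 < m) (y : GammaVert m) :
    Function.Injective (y.addConst hm) := fun _ _ h =>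
  add_left_cancel (congrFun (congrArg Subtype.val h) ⟨0, hm0⟩)

lemma setOf_constDiff_eq_range_addConst {m : ℕ} (hm : 3 ∣ m) (y : GammaVert m) :
    {z | constDiffSetoid m z y} = Set.range (y.addConst hm) := by
  ext z
  constructor
  · rintro ⟨a, h⟩
    exact ⟨a, Subtype.ext (by rw [GammaVert.addConst_val, ← h, add_sub_cancel])⟩
  · rintro ⟨a, rfl⟩
    exact ⟨a, add_sub_cancel_left _ _⟩

lemma ncard_setOf_constDiff {m : ℕ} (hm : 3 ∣ m) (hm0 : 0 < m) (y : GammaVert m) :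
    {z | constDiffSetoid m z y}.ncard = 3 := by
  rw [setOf_constDiff_eq_range_addConst hm,
    Set.ncard_range_of_injective (y.addConst_injective hm hm0), Nat.card_zmod]

lemma ncard_classes_constDiffSetoid {m : ℕ} (hm : 3 ∣ m) (hm0 : 0 < m) :
    (constDiffSetoid m).classes.ncard = 3 ^ (m - 2) := by
  have hcard := (constDiffSetoid m).ncard_classes_mul (k := 3) (by
    rintro c ⟨y, rfl⟩
    exact ncard_setOf_constDiff hm hm0 y)
  have hpow : 3 ^ (m - 1) = 3 ^ (m - 2) * 3 := by
    rw [← pow_succ]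
    congr 1
    omega
  rw [card_gammaVert hm0, hpow] at hcard
  exact Nat.eq_of_mul_eq_mul_right (by norm_num) hcard

/-- Let `n ≥ 2`. The `(2n-1)`th power of `G_{3n}` is the complete multipartite graph
`K_{3⋆3^(3n-2)}` whose partite sets are the equivalence classes of `∼`, where
`y ∼ z` iff `y - z ∈ {0, (1,…,1), (2,…,2)}`: two vertices are adjacent in the power iff
they are inequivalent, every class has 3 elements, and there are `3^(3n-2)` classes. -/
theorem power_is_complete_multipartite (n : ℕ) (hn : 2 ≤ n) :
    (∀ y z : GammaVert (3 * n),
      ((Gm (3 * n)).power (2 * n - 1)).Adj y z ↔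
        (y.1 - z.1 ≠ 0 ∧
         y.1 - z.1 ≠ (fun _ => 1 : Fin (3 * n) → ZMod 3) ∧
         y.1 - z.1 ≠ (fun _ => 2 : Fin (3 * n) → ZMod 3))) ∧
    (∀ y : GammaVert (3 * n),
      Set.ncard {z : GammaVert (3 * n) |
        z.1 - y.1 = 0 ∨ z.1 - y.1 = (fun _ => 1 : Fin (3 * n) → ZMod 3) ∨
          z.1 - y.1 = (fun _ => 2 : Fin (3 * n) → ZMod 3)} = 3) ∧
    Set.ncard {C : Set (GammaVert (3 * n)) | ∃ y : GammaVert (3 * n),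
      C = {z : GammaVert (3 * n) |
        z.1 - y.1 = 0 ∨ z.1 - y.1 = (fun _ => 1 : Fin (3 * n) → ZMod 3) ∨
          z.1 - y.1 = (fun _ => 2 : Fin (3 * n) → ZMod 3)}} = 3 ^ (3 * n - 2) := by
  have hm : 3 ∣ 3 * n := dvd_mul_right 3 n
  have hm0 : 0 < 3 * n := by omega
  simp only [← exists_eq_const_iff]
  refine ⟨fun y z => ?_, ncard_setOf_constDiff hm hm0, ncard_classes_constDiffSetoid hm hm0⟩
  rw [Gm_power_adj_iff_not_constDiff (by omega), constDiffSetoid_iff, exists_eq_const_iff]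
  tauto
end

section
/- Let n be a positive integer and let H = K_{3^{3n−2}}[K_3 □ K_3], with vertex set {1, …, 3^{3n−2}} × (V(K_3) × V(K_3)) where V(K_3) = {0,1,2}. Partition V(K_3 □ K_3) into the three rows W_1 = {(0,0),(0,1),(0,2)}, W_2 = {(1,0),(1,1),(1,2)}, W_3 = {(2,0),(2,1),(2,2)}, and set R_i = {1,…,3^{3n−2}} × W_i. Let t be a positive even integer, let A_1, A_2, A_3 be pairwise disjoint color sets each of size t/2, and assign to each vertex v ∈ R_i the list L(v) = (A_1 ∪ A_2 ∪ A_3) ∖ A_i. Then for every proper coloring φ of H with φ(v) ∈ L(v) for all v, and for every i ∈ {1, …, 3^{3n−2}}, the set S_i = {i} × V(K_3 □ K_3) of nine vertices receives at least 5 distinct colors under φ. -/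
open SimpleGraph

/-!
Every color `c` lies in some `A k`, so no vertex of row `k` receives `c`. Each row of
`K₃ □ K₃` is a clique, so the color class of `c` meets each of the other two rows at most
once. Hence every color is used at most twice on the nine vertices of a fiber, and a
fiber sees at least `⌈9 / 2⌉ = 5` colors.
-/

namespace SimpleGraph

open Finset

variable {V W α : Type*}

theorem lexProd_adj_of_adj_right (G : SimpleGraph V) {H : SimpleGraph W} {g : V} {w w' : W}
    (h : H.Adj w w') : (G.lexProd H).Adj (g, w) (g, w') :=
  Or.inr ⟨rfl, h⟩

theorem injOn_fst_of_boxProd_top {G : SimpleGraph V} {f : V × W → α}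
    (hf : ∀ u v, (G □ ⊤).Adj u v → f u ≠ f v) (c : α) :
    Set.InjOn Prod.fst {w | f w = c} := by
  rintro u hu v hv h
  by_contra hne
  refine hf u v (boxProd_adj.2 (Or.inr ⟨(top_adj _ _).2 fun h' => hne (Prod.ext h h'), h⟩)) ?_
  exact hu.trans hv.symm

theorem card_filter_eq_le_of_boxProd_top [Fintype V] [DecidableEq V] [Fintype W]
    [DecidableEq α] {G : SimpleGraph V} {f : V × W → α}
    (hf : ∀ u v, (G □ ⊤).Adj u v → f u ≠ f v) {c : α} {k : V}
    (hk : ∀ w, f w = c → w.1 ≠ k) :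
    #{w | f w = c} ≤ Fintype.card V - 1 := by
  have hinj : Set.InjOn Prod.fst (({w | f w = c} : Finset (V × W)) : Set (V × W)) := by
    simpa using injOn_fst_of_boxProd_top hf c
  calc #{w | f w = c} = #(({w | f w = c} : Finset (V × W)).image Prod.fst) :=
        (card_image_of_injOn hinj).symm
    _ ≤ #(univ.erase k) := card_le_card fun r hr => by
        obtain ⟨w, hw, rfl⟩ := mem_image.1 hr
        exact mem_erase.2 ⟨hk w (mem_filter.1 hw).2, mem_univ _⟩
    _ = Fintype.card V - 1 := card_erase_of_mem (mem_univ k)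

theorem card_mul_le_card_image_of_row_lists [Fintype V] [DecidableEq V] [Fintype W]
    [DecidableEq α] {G : SimpleGraph V} {f : V × W → α}
    (hf : ∀ u v, (G □ ⊤).Adj u v → f u ≠ f v) (A : V → Set α)
    (hA : ∀ w, ∃ k, f w ∈ A k) (hrow : ∀ w, f w ∉ A w.1) :
    Fintype.card V * Fintype.card W ≤ (Fintype.card V - 1) * #(univ.image f) := by
  rw [← Fintype.card_prod, ← card_univ]
  refine card_le_mul_card_image _ _ fun c hc => ?_
  obtain ⟨w₀, -, rfl⟩ := mem_image.1 hc
  obtain ⟨k, hk⟩ := hA w₀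
  simpa using card_filter_eq_le_of_boxProd_top hf fun w hw hwk => hrow w (hwk ▸ hw ▸ hk)

end SimpleGraph

theorem five_colors_on_each_fiber_general (n : ℕ) (A : Fin 3 → Finset ℕ)
    (φ : Fin (3 ^ (3 * n - 2)) × (Fin 3 × Fin 3) → ℕ)
    (hφL : ∀ v, φ v ∈ (A 0 ∪ A 1 ∪ A 2) \ A v.2.1)
    (hφ : ∀ u v, (SimpleGraph.lexProd (⊤ : SimpleGraph (Fin (3 ^ (3 * n - 2))))
        ((⊤ : SimpleGraph (Fin 3)).boxProd (⊤ : SimpleGraph (Fin 3)))).Adj u v →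
      φ u ≠ φ v)
    (i : Fin (3 ^ (3 * n - 2))) :
    5 ≤ (Finset.univ.image (fun w : Fin 3 × Fin 3 => φ (i, w))).card := by
  have hproper : ∀ w w', ((⊤ : SimpleGraph (Fin 3)) □ ⊤).Adj w w' → φ (i, w) ≠ φ (i, w') :=
    fun w w' h => hφ _ _ (lexProd_adj_of_adj_right _ h)
  have hA : ∀ w, ∃ k, φ (i, w) ∈ (A k : Set ℕ) := fun w => by
    have hmem := (Finset.mem_sdiff.1 (hφL (i, w))).1
    simp only [Finset.mem_union] at hmem
    rcases hmem with (h | h) | h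
    exacts [⟨0, h⟩, ⟨1, h⟩, ⟨2, h⟩]
  have h9 := card_mul_le_card_image_of_row_lists hproper (fun k => (A k : Set ℕ)) hA
    fun w => (Finset.mem_sdiff.1 (hφL (i, w))).2
  simp only [Fintype.card_fin] at h9
  omega

/-- Let `n ≥ 1`, `H = K_{3^(3n-2)}[K_3 □ K_3]`, and `t` a positive even integer.
Let `A₁, A₂, A₃` be pairwise disjoint color sets of size `t/2`, and give each vertex
`v = (g, (r, c))` the list `(A₁ ∪ A₂ ∪ A₃) \ A_r` (the row of `v` determines the
removed set). Then every proper coloring `φ` from these lists uses at least 5 distinct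
colors on each set `S_i = {i} × V(K_3 □ K_3)`. -/
theorem five_colors_on_each_fiber (n : ℕ) (hn : 1 ≤ n) (t : ℕ) (ht : 0 < t)
    (hte : Even t) (A : Fin 3 → Finset ℕ)
    (hdisj : ∀ i j : Fin 3, i ≠ j → Disjoint (A i) (A j))
    (hcard : ∀ i : Fin 3, (A i).card = t / 2)
    (φ : Fin (3 ^ (3 * n - 2)) × (Fin 3 × Fin 3) → ℕ)
    (hφL : ∀ v, φ v ∈ (A 0 ∪ A 1 ∪ A 2) \ A v.2.1)
    (hφ : ∀ u v, (SimpleGraph.lexProd (⊤ : SimpleGraph (Fin (3 ^ (3 * n - 2))))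
        ((⊤ : SimpleGraph (Fin 3)).boxProd (⊤ : SimpleGraph (Fin 3)))).Adj u v →
      φ u ≠ φ v)
    (i : Fin (3 ^ (3 * n - 2))) :
    5 ≤ (Finset.univ.image (fun w : Fin 3 × Fin 3 => φ (i, w))).card :=
  five_colors_on_each_fiber_general n A φ hφL hφ i
end
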